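/- arXiv:1504.07069 — 2 statements merged into one kernel-verified Lean document; each statement's English description precedes it below -/
import Mathlib

section
/- Let A be a Banach algebra over ℂ and let h ∈ A*. If the completion of the quotient normed space A / N_{r,h} (with N_{r,h} = {x ∈ A : h·x = 0} and norm induced by ‖x‖_{r,h} := ‖h·x‖) is reflexive, then h is weakly almost periodic: the set {h·a : a ∈ A, ‖a‖ ≤ 1} is relatively weakly compact in A*, i.e., its closure in the weak topology σ(A*, A**) is weakly compact. -/
/-!
The orbit `{h·a : ‖a‖ ≤ 1}` is a bounded subset of the closed subspace
`F = closure (h·A)`. Since `F` is reflexive, its closed balls are images of the weak*-compact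
balls of `F**` (Banach–Alaoglu) under the weak*-to-weak continuous map `F** ≃ F`, and the
inclusion `F → A*` is weakly continuous, so the orbit sits in a weakly compact subset of `A*`.
-/

/-- The right module action of `A` on its dual, `(h·x)(y) = h (x y)`, bundled as a
continuous linear map in `x`. -/
noncomputable def rAct (A : Type*) [NormedRing A] [NormedAlgebra ℂ A]
    (h : A →L[ℂ] ℂ) : A →L[ℂ] (A →L[ℂ] ℂ) :=
  (ContinuousLinearMap.compL ℂ A A ℂ h).comp (ContinuousLinearMap.mul ℂ A)

/-- The identity map from a normed space to itself equipped with the weak topology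
`σ(E, E*)` (the types are definitionally equal). -/
def toWeak {E : Type*} [NormedAddCommGroup E] [NormedSpace ℂ E] (x : E) :
    WeakSpace ℂ E := x

/-- A normed space `E` is reflexive when the canonical embedding into its double dual
is surjective. -/
def IsReflexiveSpace (E : Type*) [NormedAddCommGroup E] [NormedSpace ℂ E] : Prop :=
  Function.Surjective (NormedSpace.inclusionInDoubleDual ℂ E)

section Reflexive

variable {E : Type*} [NormedAddCommGroup E] [NormedSpace ℂ E]

noncomputable def IsReflexiveSpace.equiv (hE : IsReflexiveSpace E) :
    E ≃ₗᵢ[ℂ] StrongDual ℂ (StrongDual ℂ E) :=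
  LinearIsometryEquiv.ofSurjective (NormedSpace.inclusionInDoubleDualLi ℂ) hE

theorem IsReflexiveSpace.equiv_apply (hE : IsReflexiveSpace E) (x : E) (f : StrongDual ℂ E) :
    hE.equiv x f = f x :=
  rfl

theorem IsReflexiveSpace.continuous_toWeak_equiv_symm (hE : IsReflexiveSpace E) :
    Continuous fun φ : WeakDual ℂ (StrongDual ℂ E) => toWeak (hE.equiv.symm φ.toStrongDual) := by
  refine WeakBilin.continuous_of_continuous_eval _ fun f => ?_
  have hf : (fun φ : WeakDual ℂ (StrongDual ℂ E) => f (hE.equiv.symm φ.toStrongDual)) =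
      fun φ => φ f := by
    funext φ
    rw [← hE.equiv_apply, LinearIsometryEquiv.apply_symm_apply]
    rfl
  exact hf ▸ WeakDual.eval_continuous f

theorem IsReflexiveSpace.isCompact_toWeak_closedBall (hE : IsReflexiveSpace E) (r : ℝ) :
    IsCompact (toWeak '' Metric.closedBall (0 : E) r) := by
  have hball : Metric.closedBall (0 : E) r =
      hE.equiv.symm '' (WeakDual.toStrongDual '' (WeakDual.toStrongDual ⁻¹' Metric.closedBall 0 r)) := by
    rw [Set.image_preimage_eq _ WeakDual.toStrongDual.surjective,
      LinearIsometryEquiv.image_closedBall, LinearIsometryEquiv.map_zero]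
  rw [hball, Set.image_image, Set.image_image]
  exact (WeakDual.isCompact_closedBall 0 r).image hE.continuous_toWeak_equiv_symm

end Reflexive

theorem isCompact_closure_toWeak_of_subset_reflexive {E : Type*} [NormedAddCommGroup E]
    [NormedSpace ℂ E] (F : Submodule ℂ E) (hF : IsReflexiveSpace F) {s : Set E} {r : ℝ}
    (hsF : s ⊆ F) (hsr : s ⊆ Metric.closedBall 0 r) :
    IsCompact (closure (toWeak '' s)) := by
  have hK : IsCompact (WeakSpace.map F.subtypeL '' (toWeak '' Metric.closedBall (0 : F) r)) :=
    (hF.isCompact_toWeak_closedBall r).image (WeakSpace.map F.subtypeL).continuous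
  have hsK : toWeak '' s ⊆ WeakSpace.map F.subtypeL '' (toWeak '' Metric.closedBall (0 : F) r) := by
    rintro _ ⟨x, hx, rfl⟩
    refine ⟨toWeak ⟨x, hsF hx⟩, ⟨⟨x, hsF hx⟩, ?_, rfl⟩, rfl⟩
    simpa using hsr hx
  exact hK.of_isClosed_subset isClosed_closure (closure_minimal hsK hK.isClosed)

theorem wap_of_reflexive_completion_general {A : Type*} [NormedRing A] [NormedAlgebra ℂ A]
    (h : A →L[ℂ] ℂ)
    (hrefl : IsReflexiveSpace ↥((LinearMap.range (rAct A h : A →ₗ[ℂ] (A →L[ℂ] ℂ))).topologicalClosure)) :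
    IsCompact (closure (toWeak '' (rAct A h '' {a : A | ‖a‖ ≤ 1}))) := by
  refine isCompact_closure_toWeak_of_subset_reflexive _ hrefl (r := ‖rAct A h‖) ?_ ?_
  · rintro _ ⟨a, -, rfl⟩
    exact Submodule.le_topologicalClosure _ (LinearMap.mem_range_self _ a)
  · rintro _ ⟨a, ha, rfl⟩
    simpa using (rAct A h).unit_le_opNorm a ha

/-- Let `A` be a Banach algebra over `ℂ` and `h ∈ A*`.  If the
completion of the quotient normed space `A / N_{r,h}` (with `N_{r,h} = {x | h·x = 0}`
and norm induced by `‖x‖_{r,h} = ‖h·x‖`), realized isometrically via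
`x + N_{r,h} ↦ h·x` as the closure of the range of `x ↦ h·x` in `A*`, is reflexive,
then `h` is weakly almost periodic: the orbit `{h·a : ‖a‖ ≤ 1}` is relatively compact
in the weak topology `σ(A*, A**)` of the Banach space `A*`. -/
theorem wap_of_reflexive_completion {A : Type*} [NormedRing A] [NormedAlgebra ℂ A]
    [CompleteSpace A] (h : A →L[ℂ] ℂ)
    (hrefl : IsReflexiveSpace ↥((LinearMap.range (rAct A h : A →ₗ[ℂ] (A →L[ℂ] ℂ))).topologicalClosure)) :
    IsCompact (closure (toWeak '' (rAct A h '' {a : A | ‖a‖ ≤ 1}))) :=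
  wap_of_reflexive_completion_general h hrefl
end

section
/- Let A and B be Banach algebras over ℂ, let φ : A → B be a continuous surjective algebra homomorphism, and let h ∈ B*. If the completion of the quotient normed space B / {y ∈ B : h·y = 0} (with norm induced by y ↦ ‖h·y‖) is reflexive, then the completion of the quotient normed space A / {x ∈ A : (h∘φ)·x = 0} (with norm induced by x ↦ ‖(h∘φ)·x‖) is reflexive. -/
open Function ContinuousLinearMap

section Reflexive

variable {E F : Type*} [NormedAddCommGroup E] [NormedSpace ℂ E]
  [NormedAddCommGroup F] [NormedSpace ℂ F]

lemma IsReflexiveSpace.of_continuousLinearEquiv (e : E ≃L[ℂ] F) (hE : IsReflexiveSpace E) :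
    IsReflexiveSpace F := by
  intro Φ
  obtain ⟨x, hx⟩ := hE (Φ.comp ((compL ℂ F E ℂ).flip (e.symm : F →L[ℂ] E)))
  refine ⟨e x, ?_⟩
  ext g
  have hg : ((g.comp (e : E →L[ℂ] F)).comp (e.symm : F →L[ℂ] E)) = g := by
    rw [ContinuousLinearMap.comp_assoc, ContinuousLinearEquiv.coe_comp_coe_symm,
      ContinuousLinearMap.comp_id]
  simpa [NormedSpace.dual_def, hg] using congrArg (· (g.comp (e : E →L[ℂ] F))) hx

lemma IsReflexiveSpace.map_of_antilipschitz [CompleteSpace E] [CompleteSpace F] {K : NNReal}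
    (T : E →L[ℂ] F) (hT : AntilipschitzWith K T) {p : Submodule ℂ E} (hp : IsClosed (p : Set E))
    (hrefl : IsReflexiveSpace p) : IsReflexiveSpace (p.map (T : E →ₗ[ℂ] F)) := by
  have : CompleteSpace p := hp.completeSpace_coe
  have hTp : AntilipschitzWith (1 * K) (T.comp p.subtypeL) :=
    hT.comp (AntilipschitzWith.subtype_coe _)
  have hrange : LinearMap.range (T.comp p.subtypeL : p →ₗ[ℂ] F) = p.map (T : E →ₗ[ℂ] F) := by
    rw [toLinearMap_comp, LinearMap.range_comp]
    exact congrArg _ p.range_subtype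
  exact hrefl.of_continuousLinearEquiv <|
    ((T.comp p.subtypeL).equivRange hTp.injective
      (hTp.isClosed_range (T.comp p.subtypeL).uniformContinuous)).trans
      (ContinuousLinearEquiv.ofEq _ _ hrange)

end Reflexive

lemma Submodule.map_topologicalClosure_of_antilipschitz {𝕜 E F : Type*}
    [NontriviallyNormedField 𝕜] [NormedAddCommGroup E] [NormedSpace 𝕜 E] [CompleteSpace E]
    [NormedAddCommGroup F] [NormedSpace 𝕜 F] {K : NNReal} (T : E →L[𝕜] F)
    (hT : AntilipschitzWith K T) (p : Submodule 𝕜 E) :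
    p.topologicalClosure.map (T : E →ₗ[𝕜] F) = (p.map (T : E →ₗ[𝕜] F)).topologicalClosure :=
  SetLike.coe_injective <| by
    simpa only [Submodule.map_coe, Submodule.topologicalClosure_coe, coe_coe] using
      ((hT.isClosedEmbedding T.uniformContinuous).closure_image_eq (p : Set E)).symm

lemma ContinuousLinearMap.antilipschitz_precomp_of_surjective {𝕜 E F G : Type*}
    [NontriviallyNormedField 𝕜] [NormedAddCommGroup E] [NormedSpace 𝕜 E] [CompleteSpace E]
    [NormedAddCommGroup F] [NormedSpace 𝕜 F] [CompleteSpace F]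
    [NormedAddCommGroup G] [NormedSpace 𝕜 G] (φ : E →L[𝕜] F) (hφ : Surjective φ) :
    ∃ K, AntilipschitzWith K ((compL 𝕜 E F G).flip φ) := by
  obtain ⟨C, hC, hpre⟩ := φ.exists_preimage_norm_le hφ
  refine ⟨⟨C, hC.le⟩, ((compL 𝕜 E F G).flip φ).antilipschitz_of_bound fun g ↦ ?_⟩
  refine g.opNorm_le_bound (by positivity) fun y ↦ ?_
  obtain ⟨x, rfl, hx⟩ := hpre y
  calc ‖g (φ x)‖ = ‖(g.comp φ) x‖ := rfl
    _ ≤ ‖g.comp φ‖ * ‖x‖ := (g.comp φ).le_opNorm x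
    _ ≤ ‖g.comp φ‖ * (C * ‖φ x‖) := by gcongr
    _ = C * ‖g.comp φ‖ * ‖φ x‖ := by ring

section Algebra

variable {A B : Type*} [NormedRing A] [NormedAlgebra ℂ A] [NormedRing B] [NormedAlgebra ℂ B]

lemma rAct_comp_apply (φ : A →L[ℂ] B) (hmul : ∀ x y : A, φ (x * y) = φ x * φ y)
    (h : B →L[ℂ] ℂ) (x : A) : rAct A (h.comp φ) x = (rAct B h (φ x)).comp φ := by
  ext y
  simp [rAct, hmul]

lemma map_range_rAct_of_surjective (φ : A →L[ℂ] B) (hmul : ∀ x y : A, φ (x * y) = φ x * φ y)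
    (hsurj : Surjective φ) (h : B →L[ℂ] ℂ) :
    (LinearMap.range (rAct B h : B →ₗ[ℂ] (B →L[ℂ] ℂ))).map
        ((compL ℂ A B ℂ).flip φ : (B →L[ℂ] ℂ) →ₗ[ℂ] (A →L[ℂ] ℂ)) =
      LinearMap.range (rAct A (h.comp φ) : A →ₗ[ℂ] (A →L[ℂ] ℂ)) := by
  have hfactor : (rAct A (h.comp φ) : A →ₗ[ℂ] (A →L[ℂ] ℂ)) =
      (((compL ℂ A B ℂ).flip φ).comp (rAct B h) : B →ₗ[ℂ] (A →L[ℂ] ℂ)).comp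
        (φ : A →ₗ[ℂ] B) := by
    ext1 x
    exact rAct_comp_apply φ hmul h x
  rw [hfactor, LinearMap.range_comp_of_range_eq_top _ (LinearMap.range_eq_top.mpr hsurj),
    toLinearMap_comp, LinearMap.range_comp]

end Algebra

/-- Let `A`, `B` be Banach algebras over `ℂ`, `φ : A → B` a
continuous surjective algebra homomorphism and `h ∈ B*`.  If the completion of the
quotient normed space `B / {y | h·y = 0}` (with norm induced by `y ↦ ‖h·y‖`, realized
isometrically as the closure of the range of `y ↦ h·y` in `B*`) is reflexive, then so
is the completion of `A / {x | (h∘φ)·x = 0}` (with norm induced by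
`x ↦ ‖(h∘φ)·x‖`, realized likewise inside `A*`). -/
theorem reflexive_completion_of_epimorphism {A B : Type*}
    [NormedRing A] [NormedAlgebra ℂ A] [CompleteSpace A]
    [NormedRing B] [NormedAlgebra ℂ B] [CompleteSpace B]
    (φ : A →L[ℂ] B) (hmul : ∀ x y : A, φ (x * y) = φ x * φ y)
    (hsurj : Function.Surjective φ) (h : B →L[ℂ] ℂ)
    (hrefl : IsReflexiveSpace ↥((LinearMap.range ((rAct B h : B →ₗ[ℂ] (B →L[ℂ] ℂ)))).topologicalClosure)) :
    IsReflexiveSpace ↥((LinearMap.range ((rAct A (h.comp φ) : A →ₗ[ℂ] (A →L[ℂ] ℂ)))).topologicalClosure) := by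
  obtain ⟨K, hT⟩ := φ.antilipschitz_precomp_of_surjective (G := ℂ) hsurj
  rw [← map_range_rAct_of_surjective φ hmul hsurj h,
    ← Submodule.map_topologicalClosure_of_antilipschitz _ hT]
  exact hrefl.map_of_antilipschitz _ hT (Submodule.isClosed_topologicalClosure _)
end
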